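/- arXiv:2201.07700 — 2 statements merged into one kernel-verified Lean document; each statement's English description precedes it below -/
import Mathlib

section
/- (Two-player RM-BR bound: exploitability of the average profile.) Let A : S₁ × S₂ → ℝ be the payoff matrix of a finite two-player zero-sum game and T₁ ⊆ S₁, T₂ ⊆ S₂ nonempty. Let x¹, …, xⁿ ∈ Δ(T₁) with yᵗ ∈ Δ(S₂) a best response to xᵗ for each t (attaining min_{y∈Δ(S₂)} v(xᵗ,y)), and let ŷ¹, …, ŷⁿ ∈ Δ(T₂) with x̂ᵗ ∈ Δ(S₁) a best response to ŷᵗ for each t (attaining max_{x∈Δ(S₁)} v(x,ŷᵗ)). Define R₁ = max_{x∈Δ(T₁)} Σ_t ( v(x, yᵗ) − v(xᵗ, yᵗ) ) and R₂ = max_{y∈Δ(T₂)} Σ_t ( v(x̂ᵗ, ŷᵗ) − v(x̂ᵗ, y) ). Then the exploitability of the average profile (x̄, ȳ) = ((1/n)Σ_t xᵗ, (1/n)Σ_t ŷᵗ) satisfies e(x̄, ȳ) ≤ ( min_{y∈Δ(T₂)} max_{x∈Δ(S₁)} v(x,y) − max_{x∈Δ(T₁)} min_{y∈Δ(S₂)}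 v(x,y) ) + (R₁ + R₂)/n. -/
open scoped BigOperators

/-- The set of mixed strategies over a finite action set `S`. -/
def mixed (S : Type*) [Fintype S] : Set (S → ℝ) :=
  {x | (∀ a, 0 ≤ x a) ∧ ∑ a, x a = 1}

/-- Mixed strategies supported in a subset `T` of the action set. -/
def mixedOn {S : Type*} [Fintype S] (T : Set S) : Set (S → ℝ) :=
  {x | x ∈ mixed S ∧ ∀ a ∉ T, x a = 0}

/-- Expected payoff to player 1: `v(x,y) = ∑ x(a) A(a,b) y(b)`. -/
def payoff {S₁ S₂ : Type*} [Fintype S₁] [Fintype S₂]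
    (A : S₁ → S₂ → ℝ) (x : S₁ → ℝ) (y : S₂ → ℝ) : ℝ :=
  ∑ a, ∑ b, x a * A a b * y b

/-- `min_{y ∈ Δ(S₂)} v(x,y)`, the value of player 1's strategy `x`
against a best-responding opponent. -/
noncomputable def minVal {S₁ S₂ : Type*} [Fintype S₁] [Fintype S₂]
    (A : S₁ → S₂ → ℝ) (x : S₁ → ℝ) : ℝ :=
  sInf (payoff A x '' mixed S₂)

/-- `max_{x ∈ Δ(S₁)} v(x,y)`, the value of a best response against
player 2's strategy `y`. -/
noncomputable def maxVal {S₁ S₂ : Type*} [Fintype S₁] [Fintype S₂]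
    (A : S₁ → S₂ → ℝ) (y : S₂ → ℝ) : ℝ :=
  sSup ((fun x => payoff A x y) '' mixed S₁)

/-- Exploitability of the profile `(x,y)`:
`e(x,y) = max_{x'} v(x',y) - min_{y'} v(x,y')`. -/
noncomputable def exploit {S₁ S₂ : Type*} [Fintype S₁] [Fintype S₂]
    (A : S₁ → S₂ → ℝ) (x : S₁ → ℝ) (y : S₂ → ℝ) : ℝ :=
  maxVal A y - minVal A x

/-- The mixed strategy placing probability 1 on the pure strategy `a`. -/
def pureStrat {S : Type*} [DecidableEq S] (a : S) : S → ℝ :=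
  fun b => if b = a then 1 else 0


section Helpers

variable {S : Type*} [Fintype S]

lemma pureStrat_mem_mixed [DecidableEq S] (a : S) : pureStrat a ∈ mixed S := by
  constructor
  · intro b; unfold pureStrat; split <;> norm_num
  · simp [pureStrat]

lemma mixed_nonempty [Nonempty S] : (mixed S).Nonempty := by
  classical
  obtain ⟨a⟩ := ‹Nonempty S›
  exact ⟨pureStrat a, pureStrat_mem_mixed a⟩

lemma mixedOn_nonempty {T : Set S} (hT : T.Nonempty) : (mixedOn T).Nonempty := by
  classical
  obtain ⟨a, ha⟩ := hT
  refine ⟨pureStrat a, pureStrat_mem_mixed a, ?_⟩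
  intro b hb
  unfold pureStrat
  split
  · rename_i h; exact absurd (h ▸ ha) hb
  · rfl

lemma mixed_le_one {x : S → ℝ} (hx : x ∈ mixed S) (a : S) : x a ≤ 1 := by
  rcases hx with ⟨h0, hs⟩
  calc x a ≤ ∑ b, x b := Finset.single_le_sum (fun b _ => h0 b) (Finset.mem_univ a)
  _ = 1 := hs

variable {S₁ S₂ : Type*} [Fintype S₁] [Fintype S₂]

lemma payoff_abs_le (A : S₁ → S₂ → ℝ) {x : S₁ → ℝ} {y : S₂ → ℝ}
    (hx : x ∈ mixed S₁) (hy : y ∈ mixed S₂) :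
    |payoff A x y| ≤ ∑ a, ∑ b, |A a b| := by
  unfold payoff
  calc |∑ a, ∑ b, x a * A a b * y b| ≤ ∑ a, |∑ b, x a * A a b * y b| :=
        Finset.abs_sum_le_sum_abs _ _
  _ ≤ ∑ a, ∑ b, |x a * A a b * y b| :=
        Finset.sum_le_sum fun a _ => Finset.abs_sum_le_sum_abs _ _
  _ ≤ ∑ a, ∑ b, |A a b| := by
        refine Finset.sum_le_sum fun a _ => Finset.sum_le_sum fun b _ => ?_
        rw [abs_mul, abs_mul, abs_of_nonneg (hx.1 a), abs_of_nonneg (hy.1 b)]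
        calc x a * |A a b| * y b ≤ 1 * |A a b| * 1 := by
              apply mul_le_mul _ (mixed_le_one hy b) (hy.1 b) (by positivity)
              exact mul_le_mul (mixed_le_one hx a) le_rfl (abs_nonneg _) zero_le_one
        _ = |A a b| := by ring

lemma payoff_avg_left (A : S₁ → S₂ → ℝ) {n : ℕ} (x : Fin n → S₁ → ℝ) (y : S₂ → ℝ) :
    payoff A (fun a => (∑ t, x t a) / n) y = (∑ t, payoff A (x t) y) / n := by
  unfold payoff
  simp only [div_mul_eq_mul_div, Finset.sum_mul, Finset.sum_div]
  conv_lhs => enter [2, a]; rw [Finset.sum_comm]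
  rw [Finset.sum_comm]

lemma payoff_avg_right (A : S₁ → S₂ → ℝ) {n : ℕ} (x : S₁ → ℝ) (y : Fin n → S₂ → ℝ) :
    payoff A x (fun b => (∑ t, y t b) / n) = (∑ t, payoff A x (y t)) / n := by
  unfold payoff
  simp only [← mul_div_assoc, Finset.mul_sum, Finset.sum_div]
  conv_lhs => enter [2, a]; rw [Finset.sum_comm]
  rw [Finset.sum_comm]

end Helpers

/-- two-player RM-BR bound on the exploitability of the
average profile. -/
theorem rmbr_two_player_bound
    {S₁ S₂ : Type*} [Fintype S₁] [Fintype S₂] [Nonempty S₁] [Nonempty S₂]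
    (A : S₁ → S₂ → ℝ)
    (T₁ : Set S₁) (T₂ : Set S₂) (hT₁ : T₁.Nonempty) (hT₂ : T₂.Nonempty)
    (n : ℕ) (hn : 0 < n)
    (x : Fin n → S₁ → ℝ) (hx : ∀ t, x t ∈ mixedOn T₁)
    (y : Fin n → S₂ → ℝ) (hy : ∀ t, y t ∈ mixed S₂)
    -- yᵗ is a best response to xᵗ, attaining min_{y∈Δ(S₂)} v(xᵗ,y)
    (hbr1 : ∀ t, ∀ y' ∈ mixed S₂, payoff A (x t) (y t) ≤ payoff A (x t) y')
    (yhat : Fin n → S₂ → ℝ) (hyhat : ∀ t, yhat t ∈ mixedOn T₂)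
    (xhat : Fin n → S₁ → ℝ) (hxhat : ∀ t, xhat t ∈ mixed S₁)
    -- x̂ᵗ is a best response to ŷᵗ, attaining max_{x∈Δ(S₁)} v(x,ŷᵗ)
    (hbr2 : ∀ t, ∀ x' ∈ mixed S₁, payoff A x' (yhat t) ≤ payoff A (xhat t) (yhat t))
    -- R₁ = max_{x∈Δ(T₁)} ∑ₜ (v(x,yᵗ) − v(xᵗ,yᵗ))
    (R₁ : ℝ)
    (hR₁ : R₁ = sSup ((fun x' => ∑ t, (payoff A x' (y t) - payoff A (x t) (y t))) ''
      mixedOn T₁))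
    -- R₂ = max_{y∈Δ(T₂)} ∑ₜ (v(x̂ᵗ,ŷᵗ) − v(x̂ᵗ,y))
    (R₂ : ℝ)
    (hR₂ : R₂ = sSup ((fun y' => ∑ t, (payoff A (xhat t) (yhat t) - payoff A (xhat t) y')) ''
      mixedOn T₂))
    -- average profile
    (xbar : S₁ → ℝ) (hxbar : xbar = fun a => (∑ t, x t a) / n)
    (ybar : S₂ → ℝ) (hybar : ybar = fun b => (∑ t, yhat t b) / n) :
    exploit A xbar ybar ≤
      (sInf (maxVal A '' mixedOn T₂) - sSup (minVal A '' mixedOn T₁)) + (R₁ + R₂) / n := by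
  classical
  have hn' : (0:ℝ) < n := by exact_mod_cast hn
  set C := ∑ a, ∑ b, |A a b| with hC
  have hm1 : (mixed S₁).Nonempty := mixed_nonempty
  have hm2 : (mixed S₂).Nonempty := mixed_nonempty
  have hmT1 : (mixedOn T₁).Nonempty := mixedOn_nonempty hT₁
  have hmT2 : (mixedOn T₂).Nonempty := mixedOn_nonempty hT₂
  have hsub1 : mixedOn T₁ ⊆ mixed S₁ := fun z hz => hz.1
  have hsub2 : mixedOn T₂ ⊆ mixed S₂ := fun z hz => hz.1
  -- boundedness facts
  have hbdd_max : ∀ y' ∈ mixed S₂, BddAbove ((fun x' => payoff A x' y') '' mixed S₁) := by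
    intro y' hy'
    refine ⟨C, ?_⟩
    rintro _ ⟨x', hx', rfl⟩
    exact (abs_le.mp (payoff_abs_le A hx' hy')).2
  have hbdd_min : ∀ x' ∈ mixed S₁, BddBelow (payoff A x' '' mixed S₂) := by
    intro x' hx'
    refine ⟨-C, ?_⟩
    rintro _ ⟨y', hy', rfl⟩
    exact (abs_le.mp (payoff_abs_le A hx' hy')).1
  -- Step A : maxVal A ybar ≤ average of v(x̂ᵗ, ŷᵗ)
  have stepA : maxVal A ybar ≤ (∑ t, payoff A (xhat t) (yhat t)) / n := by
    apply csSup_le (hm1.image _)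
    rintro _ ⟨x', hx', rfl⟩
    show payoff A x' ybar ≤ _
    rw [hybar, payoff_avg_right]
    gcongr with t _
    exact hbr2 t x' hx'
  -- Step B : average of v(xᵗ, yᵗ) ≤ minVal A xbar
  have stepB : (∑ t, payoff A (x t) (y t)) / n ≤ minVal A xbar := by
    apply le_csInf (hm2.image _)
    rintro _ ⟨y', hy', rfl⟩
    rw [hxbar, payoff_avg_left]
    gcongr with t _
    exact hbr1 t y' hy'
  -- Step C : average of v(x̂ᵗ, ŷᵗ) ≤ sInf (maxVal '' mixedOn T₂) + R₂/n
  have stepC : (∑ t, payoff A (xhat t) (yhat t)) / n ≤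
      sInf (maxVal A '' mixedOn T₂) + R₂ / n := by
    rw [← sub_le_iff_le_add]
    apply le_csInf (hmT2.image _)
    rintro _ ⟨y', hy', rfl⟩
    have h1 : ∑ t, (payoff A (xhat t) (yhat t) - payoff A (xhat t) y') ≤ R₂ := by
      rw [hR₂]
      apply le_csSup _ (Set.mem_image_of_mem _ hy')
      refine ⟨2 * n * C, ?_⟩
      rintro _ ⟨y'', hy'', rfl⟩
      have : ∀ t : Fin n, payoff A (xhat t) (yhat t) - payoff A (xhat t) y'' ≤ 2 * C := by
        intro t
        have h1 := abs_le.mp (payoff_abs_le A (hxhat t) (hsub2 (hyhat t)))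
        have h2 := abs_le.mp (payoff_abs_le A (hxhat t) (hsub2 hy''))
        linarith [h1.2, h2.1]
      calc ∑ t, (payoff A (xhat t) (yhat t) - payoff A (xhat t) y'')
          ≤ ∑ _t : Fin n, 2 * C := Finset.sum_le_sum fun t _ => this t
        _ = n * (2 * C) := by simp [Finset.sum_const, mul_comm]
        _ = 2 * n * C := by ring
    have h2 : ∀ t : Fin n, payoff A (xhat t) y' ≤ maxVal A y' :=
      fun t => le_csSup (hbdd_max y' (hsub2 hy')) ⟨xhat t, hxhat t, rfl⟩
    have h3 : ∑ t, payoff A (xhat t) (yhat t) ≤ n * maxVal A y' + R₂ := by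
      have : ∑ t, payoff A (xhat t) y' ≤ ∑ _t : Fin n, maxVal A y' :=
        Finset.sum_le_sum fun t _ => h2 t
      rw [Finset.sum_sub_distrib] at h1
      simp only [Finset.sum_const, Finset.card_univ, Fintype.card_fin, nsmul_eq_mul] at this
      linarith
    rw [sub_le_iff_le_add]
    calc (∑ t, payoff A (xhat t) (yhat t)) / (n:ℝ) ≤ ((n:ℝ) * maxVal A y' + R₂) / n := by
          gcongr
      _ = maxVal A y' + R₂ / n := by rw [add_div, mul_div_cancel_left₀ _ (ne_of_gt hn')]
  -- Step D : sSup (minVal '' mixedOn T₁) ≤ average of v(xᵗ, yᵗ) + R₁/n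
  have stepD : sSup (minVal A '' mixedOn T₁) ≤
      (∑ t, payoff A (x t) (y t)) / n + R₁ / n := by
    apply csSup_le (hmT1.image _)
    rintro _ ⟨x', hx', rfl⟩
    have h1 : ∑ t, (payoff A x' (y t) - payoff A (x t) (y t)) ≤ R₁ := by
      rw [hR₁]
      apply le_csSup _ (Set.mem_image_of_mem _ hx')
      refine ⟨2 * n * C, ?_⟩
      rintro _ ⟨x'', hx'', rfl⟩
      have : ∀ t : Fin n, payoff A x'' (y t) - payoff A (x t) (y t) ≤ 2 * C := by
        intro t
        have h1 := abs_le.mp (payoff_abs_le A (hsub1 hx'') (hy t))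
        have h2 := abs_le.mp (payoff_abs_le A (hsub1 (hx t)) (hy t))
        linarith [h1.2, h2.1]
      calc ∑ t, (payoff A x'' (y t) - payoff A (x t) (y t))
          ≤ ∑ _t : Fin n, 2 * C := Finset.sum_le_sum fun t _ => this t
        _ = n * (2 * C) := by simp [Finset.sum_const, mul_comm]
        _ = 2 * n * C := by ring
    have h2 : ∀ t : Fin n, minVal A x' ≤ payoff A x' (y t) :=
      fun t => csInf_le (hbdd_min x' (hsub1 hx')) ⟨y t, hy t, rfl⟩
    have h3 : n * minVal A x' ≤ ∑ t, payoff A (x t) (y t) + R₁ := by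
      have : ∑ _t : Fin n, minVal A x' ≤ ∑ t, payoff A x' (y t) :=
        Finset.sum_le_sum fun t _ => h2 t
      rw [Finset.sum_sub_distrib] at h1
      simp only [Finset.sum_const, Finset.card_univ, Fintype.card_fin, nsmul_eq_mul] at this
      linarith
    calc minVal A x' = ((n:ℝ) * minVal A x') / n := by
          rw [mul_div_cancel_left₀ _ (ne_of_gt hn')]
      _ ≤ (∑ t, payoff A (x t) (y t) + R₁) / n := by gcongr
      _ = (∑ t, payoff A (x t) (y t)) / n + R₁ / n := add_div _ _ _
  unfold exploit
  have hsplit : (R₁ + R₂) / (n:ℝ) = R₁ / n + R₂ / n := add_div _ _ _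
  linarith
end

section
/- (Proposition: with ε-accurate inner solves, the exploitability of RM-BR DO never increases by more than 2ε per iteration.) Let A : S₁ × S₂ → ℝ be the payoff matrix of a finite two-player zero-sum game, ε ≥ 0, and let T₁ ⊆ T₁' ⊆ S₁ and T₂ ⊆ T₂' ⊆ S₂ be nonempty. Let x ∈ Δ(T₁) satisfy min_{y'∈Δ(S₂)} v(x, y') ≥ max_{x'∈Δ(T₁)} min_{y'∈Δ(S₂)} v(x', y') − ε, and let x⁺ ∈ Δ(T₁') satisfy the analogous ε-maximin condition for T₁'; let y ∈ Δ(T₂) satisfy max_{x'∈Δ(S₁)} v(x', y) ≤ min_{y'∈Δ(T₂)} max_{x'∈Δ(S₁)} v(x', y') + ε, and let y⁺ ∈ Δ(T₂') satisfy the analogous ε-minimax condition for T₂'. Then e(x⁺, y⁺) ≤ e(x, y) + 2ε. -/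
open scoped BigOperators

/-! The previous restricted strategy `x` stays feasible in the enlarged restricted game, so the
ε-accurate maximin strategy `x⁺` there guarantees at least `minVal A x - ε`; symmetrically `y⁺`
concedes at most `maxVal A y + ε`. The exploitability `maxVal A y - minVal A x` therefore grows by
at most `2ε`. The only analytic input is that all payoffs are bounded by `∑ |A a b|`, so the
suprema and infima over restricted strategy sets are taken over bounded sets and are not the junk value `0`. -/

-- The sign condition on `C` covers `s = ∅`, where `sInf s = sSup s = 0`.
lemma sInf_le_of_forall_abs_le {s : Set ℝ} {C : ℝ} (h : ∀ z ∈ s, |z| ≤ C) (hC : 0 ≤ C) :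
    sInf s ≤ C := by
  rcases s.eq_empty_or_nonempty with rfl | ⟨z, hz⟩
  · simpa using hC
  · exact (csInf_le ⟨-C, fun w hw => (abs_le.mp (h w hw)).1⟩ hz).trans (abs_le.mp (h z hz)).2

lemma neg_le_sSup_of_forall_abs_le {s : Set ℝ} {C : ℝ} (h : ∀ z ∈ s, |z| ≤ C) (hC : 0 ≤ C) :
    -C ≤ sSup s := by
  rcases s.eq_empty_or_nonempty with rfl | ⟨z, hz⟩
  · simpa using hC
  · exact (abs_le.mp (h z hz)).1.trans (le_csSup ⟨C, fun w hw => (abs_le.mp (h w hw)).2⟩ hz)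

section Bounds

variable {S₁ S₂ : Type*} [Fintype S₁] [Fintype S₂] (A : S₁ → S₂ → ℝ)

lemma le_one_of_mem_mixed {S : Type*} [Fintype S] {x : S → ℝ} (hx : x ∈ mixed S) (a : S) :
    x a ≤ 1 :=
  hx.2 ▸ Finset.single_le_sum (fun b _ => hx.1 b) (Finset.mem_univ a)

lemma abs_payoff_le {x : S₁ → ℝ} {y : S₂ → ℝ}
    (hx : x ∈ mixed S₁) (hy : y ∈ mixed S₂) :
    |payoff A x y| ≤ ∑ a, ∑ b, |A a b| := by
  refine (Finset.abs_sum_le_sum_abs _ _).trans <| Finset.sum_le_sum fun a _ =>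
    (Finset.abs_sum_le_sum_abs _ _).trans <| Finset.sum_le_sum fun b _ => ?_
  have hxa := hx.1 a
  have hyb := hy.1 b
  calc |x a * A a b * y b| = x a * |A a b| * y b := by
        rw [abs_mul, abs_mul, abs_of_nonneg hxa, abs_of_nonneg hyb]
    _ ≤ 1 * |A a b| * 1 := by
        gcongr
        exacts [le_one_of_mem_mixed hx a, le_one_of_mem_mixed hy b]
    _ = |A a b| := by ring

lemma minVal_le_sum_abs {x : S₁ → ℝ} (hx : x ∈ mixed S₁) :
    minVal A x ≤ ∑ a, ∑ b, |A a b| :=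
  sInf_le_of_forall_abs_le (by rintro _ ⟨y, hy, rfl⟩; exact abs_payoff_le A hx hy) (by positivity)

lemma neg_sum_abs_le_maxVal {y : S₂ → ℝ} (hy : y ∈ mixed S₂) :
    -∑ a, ∑ b, |A a b| ≤ maxVal A y :=
  neg_le_sSup_of_forall_abs_le (by rintro _ ⟨x, hx, rfl⟩; exact abs_payoff_le A hx hy)
    (by positivity)

lemma mixedOn_mono {S : Type*} [Fintype S] {T T' : Set S} (h : T ⊆ T') :
    mixedOn T ⊆ mixedOn T' :=
  fun _ hx => ⟨hx.1, fun a ha => hx.2 a (fun haT => ha (h haT))⟩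

lemma minVal_le_sSup_minVal_of_subset {T T' : Set S₁} (h : T ⊆ T') {x : S₁ → ℝ}
    (hx : x ∈ mixedOn T) : minVal A x ≤ sSup (minVal A '' mixedOn T') :=
  le_csSup ⟨∑ a, ∑ b, |A a b|, by rintro _ ⟨x', hx', rfl⟩; exact minVal_le_sum_abs A hx'.1⟩
    (Set.mem_image_of_mem _ (mixedOn_mono h hx))

lemma sInf_maxVal_le_maxVal_of_subset {T T' : Set S₂} (h : T ⊆ T') {y : S₂ → ℝ}
    (hy : y ∈ mixedOn T) : sInf (maxVal A '' mixedOn T') ≤ maxVal A y :=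
  csInf_le ⟨-∑ a, ∑ b, |A a b|, by rintro _ ⟨y', hy', rfl⟩; exact neg_sum_abs_le_maxVal A hy'.1⟩
    (Set.mem_image_of_mem _ (mixedOn_mono h hy))

end Bounds

theorem rmbr_do_exploitability_eps_nonincreasing_general
    {S₁ S₂ : Type*} [Fintype S₁] [Fintype S₂]
    (A : S₁ → S₂ → ℝ) (ε : ℝ)
    (T₁ T₁' : Set S₁) (T₂ T₂' : Set S₂)
    (hT₁sub : T₁ ⊆ T₁') (hT₂sub : T₂ ⊆ T₂')
    (x xp : S₁ → ℝ) (y yp : S₂ → ℝ)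
    -- x is an ε-accurate maximin solution over Δ(T₁)
    (hx : x ∈ mixedOn T₁)
    -- x⁺ is an ε-accurate maximin solution over Δ(T₁')
    (hxpe : sSup (minVal A '' mixedOn T₁') - ε ≤ minVal A xp)
    -- y is an ε-accurate minimax solution over Δ(T₂)
    (hy : y ∈ mixedOn T₂)
    -- y⁺ is an ε-accurate minimax solution over Δ(T₂')
    (hype : maxVal A yp ≤ sInf (maxVal A '' mixedOn T₂') + ε) :
    exploit A xp yp ≤ exploit A x y + 2 * ε := by
  have hmin : minVal A x ≤ minVal A xp + ε := by
    linarith [minVal_le_sSup_minVal_of_subset A hT₁sub hx]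
  have hmax : maxVal A yp ≤ maxVal A y + ε := by
    linarith [sInf_maxVal_le_maxVal_of_subset A hT₂sub hy]
  unfold exploit
  linarith

/-- with ε-accurate inner solves, the exploitability of RM-BR DO
never increases by more than 2ε per iteration. -/
theorem rmbr_do_exploitability_eps_nonincreasing
    {S₁ S₂ : Type*} [Fintype S₁] [Fintype S₂] [Nonempty S₁] [Nonempty S₂]
    (A : S₁ → S₂ → ℝ) (ε : ℝ) (hε : 0 ≤ ε)
    (T₁ T₁' : Set S₁) (T₂ T₂' : Set S₂)
    (hT₁ : T₁.Nonempty) (hT₂ : T₂.Nonempty)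
    (hT₁sub : T₁ ⊆ T₁') (hT₂sub : T₂ ⊆ T₂')
    (x xp : S₁ → ℝ) (y yp : S₂ → ℝ)
    -- x is an ε-accurate maximin solution over Δ(T₁)
    (hx : x ∈ mixedOn T₁)
    (hxe : sSup (minVal A '' mixedOn T₁) - ε ≤ minVal A x)
    -- x⁺ is an ε-accurate maximin solution over Δ(T₁')
    (hxp : xp ∈ mixedOn T₁')
    (hxpe : sSup (minVal A '' mixedOn T₁') - ε ≤ minVal A xp)
    -- y is an ε-accurate minimax solution over Δ(T₂)
    (hy : y ∈ mixedOn T₂)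
    (hye : maxVal A y ≤ sInf (maxVal A '' mixedOn T₂) + ε)
    -- y⁺ is an ε-accurate minimax solution over Δ(T₂')
    (hyp : yp ∈ mixedOn T₂')
    (hype : maxVal A yp ≤ sInf (maxVal A '' mixedOn T₂') + ε) :
    exploit A xp yp ≤ exploit A x y + 2 * ε :=
  rmbr_do_exploitability_eps_nonincreasing_general A ε T₁ T₁' T₂ T₂' hT₁sub hT₂sub x xp y yp hx hxpe
    hy hype
end
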